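/- Work in the polynomial ring R = ℂ[a₁,a₂,a₃,a₁₂,a₁₃,a₂₃,b₁,b₂,b₃,b₁₂,b₁₃,b₂₃] in 12 indeterminates, and set (abb) := a₁b₂₃ − a₂b₁₃ + a₃b₁₂, (aab) := b₁a₂₃ − b₂a₁₃ + b₃a₁₂, and (ab)₁₂ := a₁b₂ − a₂b₁. For θ ∈ ℤ⁴ let F_θ(a) denote the Γ-series evaluated in the variables (a₁,a₂,a₁₃,a₂₃), and for ϑ ∈ ℤ⁴ let G_ϑ(b) denote the Γ-series evaluated in the variables (b₁,b₂,b₁₃,b₂₃). Then for all nonnegative integers λ, μ, ω, the element (abb)^λ·(aab)^μ·(ab)₁₂^ω / (λ!·μ!·ω!) of R lies in the ℂ-linear span of the set {a₃^u·a₁₂^v·(a₂a₁₃ − a₁a₂₃)^p·F_θ(a) · b₃^g·b₁₂^h·(b₂b₁₃ − b₁b₂₃)^q·G_ϑ(b) : u,v,p,g,h,q ∈ ℕ, θ,ϑ ∈ ℤ⁴}. -/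
import Mathlib


open MvPolynomial Finset

/-- The hypergeometric Γ-series `F_γ` evaluated on a quadruple `z` of polynomials. -/
noncomputable def GammaSeriesAt {σ : Type} (γ : Fin 4 → ℤ)
    (z : Fin 4 → MvPolynomial σ ℂ) : MvPolynomial σ ℂ :=
  ∑ n ∈ Finset.Icc (max (-γ 0) (-γ 3)) (min (γ 1) (γ 2)),
    MvPolynomial.C ((((γ 0 + n).toNat.factorial * (γ 1 - n).toNat.factorial *
        (γ 2 - n).toNat.factorial * (γ 3 + n).toNat.factorial : ℕ) : ℂ))⁻¹ *
      (z 0 ^ (γ 0 + n).toNat * z 1 ^ (γ 1 - n).toNat *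
        z 2 ^ (γ 2 - n).toNat * z 3 ^ (γ 3 + n).toNat)

namespace GammaAux

noncomputable def D : MvPolynomial (Fin 4) ℂ := X 1 * X 2 - X 0 * X 3

noncomputable def mono (p q r s : ℕ) : MvPolynomial (Fin 4) ℂ :=
  X 0 ^ p * X 1 ^ q * X 2 ^ r * X 3 ^ s

def genSet : Set (MvPolynomial (Fin 4) ℂ) :=
  {p | ∃ (pq : ℕ) (θ : Fin 4 → ℤ), p = D ^ pq * GammaSeriesAt θ X}

noncomputable def S : Submodule ℂ (MvPolynomial (Fin 4) ℂ) := Submodule.span ℂ genSet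

lemma gamma_mem (θ : Fin 4 → ℤ) : GammaSeriesAt θ X ∈ S := by
  apply Submodule.subset_span
  exact ⟨0, θ, by rw [pow_zero, one_mul]⟩

lemma D_mul_mem {x : MvPolynomial (Fin 4) ℂ} (hx : x ∈ S) : D * x ∈ S := by
  induction hx using Submodule.span_induction with
  | mem x h =>
      obtain ⟨pq, θ, rfl⟩ := h
      exact Submodule.subset_span ⟨pq + 1, θ, by ring⟩
  | zero => simpa using S.zero_mem
  | add x y hx hy ihx ihy => rw [mul_add]; exact S.add_mem ihx ihy
  | smul a x hx ih => rw [mul_smul_comm]; exact S.smul_mem a ih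

/-- coefficient in the Γ-series -/
noncomputable def cf (g0 g1 g2 g3 k : ℕ) : ℂ :=
  (((g0 + k).factorial * (g1 - k).factorial * (g2 - k).factorial *
    (g3 + k).factorial : ℕ) : ℂ)⁻¹

lemma gamma_eval (g0 g1 g2 g3 : ℕ) (h : min g0 g3 = 0) :
    GammaSeriesAt ![(g0 : ℤ), g1, g2, g3] X =
      ∑ k ∈ range (min g1 g2 + 1),
        C (cf g0 g1 g2 g3 k) * mono (g0 + k) (g1 - k) (g2 - k) (g3 + k) := by
  unfold GammaSeriesAt
  refine Finset.sum_nbij' (fun n => n.toNat) (fun k => (k : ℤ)) ?_ ?_ ?_ ?_ ?_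
  · intro n hn
    simp only [Matrix.cons_val_zero, Matrix.cons_val_one, Matrix.head_cons,
      Matrix.cons_val_two, Matrix.tail_cons, Matrix.cons_val_three,
      Finset.mem_Icc, Finset.mem_range] at hn ⊢
    omega
  · intro k hk
    simp only [Matrix.cons_val_zero, Matrix.cons_val_one, Matrix.head_cons,
      Matrix.cons_val_two, Matrix.tail_cons, Matrix.cons_val_three,
      Finset.mem_Icc, Finset.mem_range] at hk ⊢
    omega
  · intro n hn
    simp only [Matrix.cons_val_zero, Matrix.cons_val_one, Matrix.head_cons,
      Matrix.cons_val_two, Matrix.tail_cons, Matrix.cons_val_three,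
      Finset.mem_Icc] at hn
    show ((n.toNat : ℤ)) = n
    omega
  · intro k _; simp
  · intro n hn
    simp only [Matrix.cons_val_zero, Matrix.cons_val_one, Matrix.head_cons,
      Matrix.cons_val_two, Matrix.tail_cons, Matrix.cons_val_three,
      Finset.mem_Icc] at hn
    have h0 : ((g0 : ℤ) + n).toNat = g0 + n.toNat := by omega
    have h1 : ((g1 : ℤ) - n).toNat = g1 - n.toNat := by omega
    have h2 : ((g2 : ℤ) - n).toNat = g2 - n.toNat := by omega
    have h3 : ((g3 : ℤ) + n).toNat = g3 + n.toNat := by omega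
    simp only [Matrix.cons_val_zero, Matrix.cons_val_one, Matrix.head_cons,
      Matrix.cons_val_two, Matrix.tail_cons, Matrix.cons_val_three, h0, h1, h2, h3]
    rfl

lemma cf_ne_zero (g0 g1 g2 g3 k : ℕ) : cf g0 g1 g2 g3 k ≠ 0 := by
  unfold cf
  apply inv_ne_zero
  exact Nat.cast_ne_zero.mpr (by positivity)


lemma mono_mem : ∀ (s e0 e1 e2 e3 : ℕ), min e0 e3 + min e1 e2 = s →
    mono e0 e1 e2 e3 ∈ S := by
  intro s
  induction s using Nat.strong_induction_on with
  | _ s ih =>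
    intro e0 e1 e2 e3 hs
    set t := min e0 e3 with ht
    set mk : ℕ → MvPolynomial (Fin 4) ℂ :=
      fun k => mono (e0 - t + k) (e1 + t - k) (e2 + t - k) (e3 - t + k) with hmk
    have hdiff : ∀ k, k < s → mk k - mk (k + 1) ∈ S := by
      intro k hk
      have hk1 : k < e1 + t := by omega
      have hk2 : k < e2 + t := by omega
      have heq : mk k - mk (k + 1) =
          D * mono (e0 - t + k) (e1 + t - (k + 1)) (e2 + t - (k + 1)) (e3 - t + k) := by
        simp only [hmk, mono, D]
        have hb : e1 + t - k = (e1 + t - (k + 1)) + 1 := by omega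
        have hc : e2 + t - k = (e2 + t - (k + 1)) + 1 := by omega
        have ha : e0 - t + (k + 1) = (e0 - t + k) + 1 := by omega
        have hd : e3 - t + (k + 1) = (e3 - t + k) + 1 := by omega
        rw [hb, hc, ha, hd, pow_succ, pow_succ, pow_succ, pow_succ]
        ring
      rw [heq]
      exact D_mul_mem (ih _ (by omega) _ _ _ _ rfl)
    have hm0k : ∀ k, k ≤ s → mk 0 - mk k ∈ S := by
      intro k hk
      rw [← Finset.sum_range_sub' mk k]
      exact S.sum_mem fun j hj => hdiff j (by simp at hj; omega)
    set c : ℕ → ℂ := fun k => cf (e0 - t) (e1 + t) (e2 + t) (e3 - t) k with hc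
    have hFeq : GammaSeriesAt ![((e0 - t : ℕ) : ℤ), ((e1 + t : ℕ) : ℤ),
        ((e2 + t : ℕ) : ℤ), ((e3 - t : ℕ) : ℤ)] X =
        ∑ k ∈ range (s + 1), C (c k) * mk k := by
      rw [gamma_eval _ _ _ _ (by omega)]
      have : min (e1 + t) (e2 + t) = s := by omega
      rw [this]
    have hFS : (∑ k ∈ range (s + 1), C (c k) * mk k) ∈ S := hFeq ▸ gamma_mem _
    have hCtot : (∑ k ∈ range (s + 1), c k) ≠ 0 := by
      have hre : (∑ k ∈ range (s + 1), c k) =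
          ((∑ k ∈ range (s + 1), (((e0 - t + k).factorial * (e1 + t - k).factorial *
            (e2 + t - k).factorial * (e3 - t + k).factorial : ℕ) : ℝ)⁻¹ : ℝ) : ℂ) := by
        rw [Complex.ofReal_sum]
        refine Finset.sum_congr rfl fun k _ => ?_
        show cf (e0 - t) (e1 + t) (e2 + t) (e3 - t) k = _
        unfold cf
        push_cast
        ring
      rw [hre]
      rw [Complex.ofReal_ne_zero]
      refine ne_of_gt (Finset.sum_pos (fun k _ => ?_) ⟨0, by simp⟩)
      positivity
    have key : (∑ k ∈ range (s + 1), c k) • mk 0 =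
        (∑ k ∈ range (s + 1), C (c k) * mk k) +
          ∑ k ∈ range (s + 1), c k • (mk 0 - mk k) := by
      rw [Finset.sum_smul, ← Finset.sum_add_distrib]
      refine Finset.sum_congr rfl fun k _ => ?_
      simp only [smul_sub, MvPolynomial.smul_eq_C_mul]
      ring
    have h0 : mk 0 ∈ S := by
      have hmem : ((∑ k ∈ range (s + 1), c k) • mk 0) ∈ S := by
        rw [key]
        exact S.add_mem hFS (S.sum_mem fun k hk =>
          S.smul_mem _ (hm0k k (by simp at hk; omega)))
      have := S.smul_mem (∑ k ∈ range (s + 1), c k)⁻¹ hmem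
      rwa [smul_smul, inv_mul_cancel₀ hCtot, one_smul] at this
    have hmono : mono e0 e1 e2 e3 = mk t := by
      have h0' : e0 - t + t = e0 := by omega
      have h1' : e1 + t - t = e1 := by omega
      have h2' : e2 + t - t = e2 := by omega
      have h3' : e3 - t + t = e3 := by omega
      simp only [hmk, h0', h1', h2', h3']
    rw [hmono, show mk t = mk 0 - (mk 0 - mk t) by ring]
    exact S.sub_mem h0 (hm0k t (by omega))


lemma gamma_rename {τ : Type} (f : Fin 4 → τ) (θ : Fin 4 → ℤ) :
    rename f (GammaSeriesAt θ X) = GammaSeriesAt θ (fun i => X (f i)) := by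
  unfold GammaSeriesAt
  simp only [map_sum, map_mul, map_pow, rename_C, rename_X]

end GammaAux

namespace Stmt14

/-- Variables of `R = ℂ[a₁,a₂,a₃,a₁₂,a₁₃,a₂₃,b₁,b₂,b₃,b₁₂,b₁₃,b₂₃]`. -/
noncomputable abbrev a₁ : MvPolynomial (Fin 12) ℂ := X 0
noncomputable abbrev a₂ : MvPolynomial (Fin 12) ℂ := X 1
noncomputable abbrev a₃ : MvPolynomial (Fin 12) ℂ := X 2
noncomputable abbrev a₁₂ : MvPolynomial (Fin 12) ℂ := X 3
noncomputable abbrev a₁₃ : MvPolynomial (Fin 12) ℂ := X 4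
noncomputable abbrev a₂₃ : MvPolynomial (Fin 12) ℂ := X 5
noncomputable abbrev b₁ : MvPolynomial (Fin 12) ℂ := X 6
noncomputable abbrev b₂ : MvPolynomial (Fin 12) ℂ := X 7
noncomputable abbrev b₃ : MvPolynomial (Fin 12) ℂ := X 8
noncomputable abbrev b₁₂ : MvPolynomial (Fin 12) ℂ := X 9
noncomputable abbrev b₁₃ : MvPolynomial (Fin 12) ℂ := X 10
noncomputable abbrev b₂₃ : MvPolynomial (Fin 12) ℂ := X 11

noncomputable abbrev abb : MvPolynomial (Fin 12) ℂ := a₁ * b₂₃ - a₂ * b₁₃ + a₃ * b₁₂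
noncomputable abbrev aab : MvPolynomial (Fin 12) ℂ := b₁ * a₂₃ - b₂ * a₁₃ + b₃ * a₁₂
noncomputable abbrev ab₁₂ : MvPolynomial (Fin 12) ℂ := a₁ * b₂ - a₂ * b₁

open GammaAux Pointwise

def fa : Fin 4 → Fin 12 := ![0, 1, 4, 5]
def fb : Fin 4 → Fin 12 := ![6, 7, 10, 11]

lemma fa_X : (fun i => (X (fa i) : MvPolynomial (Fin 12) ℂ)) = ![X 0, X 1, X 4, X 5] := by
  funext i; fin_cases i <;> rfl

lemma fb_X : (fun i => (X (fb i) : MvPolynomial (Fin 12) ℂ)) = ![X 6, X 7, X 10, X 11] := by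
  funext i; fin_cases i <;> rfl

def SetA : Set (MvPolynomial (Fin 12) ℂ) :=
  {p | ∃ (u v pq : ℕ) (θ : Fin 4 → ℤ),
    p = X 2 ^ u * X 3 ^ v * (X 1 * X 4 - X 0 * X 5) ^ pq *
      GammaSeriesAt θ ![X 0, X 1, X 4, X 5]}

def SetB : Set (MvPolynomial (Fin 12) ℂ) :=
  {p | ∃ (g h q : ℕ) (ϑ : Fin 4 → ℤ),
    p = X 8 ^ g * X 9 ^ h * (X 7 * X 10 - X 6 * X 11) ^ q *
      GammaSeriesAt ϑ ![X 6, X 7, X 10, X 11]}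

lemma memA (c2 c3 e0 e1 e2 e3 : ℕ) :
    (X 2 ^ c2 * X 3 ^ c3 * (X 0 ^ e0 * X 1 ^ e1 * X 4 ^ e2 * X 5 ^ e3) :
      MvPolynomial (Fin 12) ℂ) ∈ Submodule.span ℂ SetA := by
  have h1 : (rename fa).toLinearMap (mono e0 e1 e2 e3) ∈
      Submodule.span ℂ ((rename fa).toLinearMap '' genSet) :=
    Submodule.apply_mem_span_image_of_mem_span _ (mono_mem _ e0 e1 e2 e3 rfl)
  have h2 : (LinearMap.mulLeft ℂ ((X 2 : MvPolynomial (Fin 12) ℂ) ^ c2 * X 3 ^ c3))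
      ((rename fa).toLinearMap (mono e0 e1 e2 e3)) ∈
      Submodule.span ℂ ((LinearMap.mulLeft ℂ ((X 2 : MvPolynomial (Fin 12) ℂ) ^ c2 * X 3 ^ c3)) ''
        ((rename fa).toLinearMap '' genSet)) :=
    Submodule.apply_mem_span_image_of_mem_span _ h1
  have h3 : ((LinearMap.mulLeft ℂ ((X 2 : MvPolynomial (Fin 12) ℂ) ^ c2 * X 3 ^ c3)) ''
      ((rename fa).toLinearMap '' genSet)) ⊆ SetA := by
    rintro p ⟨q, ⟨r, ⟨pq, θ, rfl⟩, rfl⟩, rfl⟩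
    refine ⟨c2, c3, pq, θ, ?_⟩
    simp only [LinearMap.mulLeft_apply, AlgHom.toLinearMap_apply, map_mul, map_pow, map_sub,
      D, rename_X, gamma_rename, fa_X]
    have : (fa 1 : Fin 12) = 1 := rfl
    have h0 : (fa 0 : Fin 12) = 0 := rfl
    have h2' : (fa 2 : Fin 12) = 4 := rfl
    have h3' : (fa 3 : Fin 12) = 5 := rfl
    rw [this, h0, h2', h3']
    ring
  have heq : (LinearMap.mulLeft ℂ ((X 2 : MvPolynomial (Fin 12) ℂ) ^ c2 * X 3 ^ c3))
      ((rename fa).toLinearMap (mono e0 e1 e2 e3)) =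
      X 2 ^ c2 * X 3 ^ c3 * (X 0 ^ e0 * X 1 ^ e1 * X 4 ^ e2 * X 5 ^ e3) := by
    simp only [LinearMap.mulLeft_apply, AlgHom.toLinearMap_apply, mono, map_mul, map_pow,
      rename_X]
    have h0 : (fa 0 : Fin 12) = 0 := rfl
    have h1' : (fa 1 : Fin 12) = 1 := rfl
    have h2' : (fa 2 : Fin 12) = 4 := rfl
    have h3' : (fa 3 : Fin 12) = 5 := rfl
    rw [h0, h1', h2', h3']
  exact heq ▸ (Submodule.span_mono h3 h2)

lemma memB (c2 c3 e0 e1 e2 e3 : ℕ) :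
    (X 8 ^ c2 * X 9 ^ c3 * (X 6 ^ e0 * X 7 ^ e1 * X 10 ^ e2 * X 11 ^ e3) :
      MvPolynomial (Fin 12) ℂ) ∈ Submodule.span ℂ SetB := by
  have h1 : (rename fb).toLinearMap (mono e0 e1 e2 e3) ∈
      Submodule.span ℂ ((rename fb).toLinearMap '' genSet) :=
    Submodule.apply_mem_span_image_of_mem_span _ (mono_mem _ e0 e1 e2 e3 rfl)
  have h2 : (LinearMap.mulLeft ℂ ((X 8 : MvPolynomial (Fin 12) ℂ) ^ c2 * X 9 ^ c3))
      ((rename fb).toLinearMap (mono e0 e1 e2 e3)) ∈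
      Submodule.span ℂ ((LinearMap.mulLeft ℂ ((X 8 : MvPolynomial (Fin 12) ℂ) ^ c2 * X 9 ^ c3)) ''
        ((rename fb).toLinearMap '' genSet)) :=
    Submodule.apply_mem_span_image_of_mem_span _ h1
  have h3 : ((LinearMap.mulLeft ℂ ((X 8 : MvPolynomial (Fin 12) ℂ) ^ c2 * X 9 ^ c3)) ''
      ((rename fb).toLinearMap '' genSet)) ⊆ SetB := by
    rintro p ⟨q, ⟨r, ⟨pq, θ, rfl⟩, rfl⟩, rfl⟩
    refine ⟨c2, c3, pq, θ, ?_⟩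
    simp only [LinearMap.mulLeft_apply, AlgHom.toLinearMap_apply, map_mul, map_pow, map_sub,
      D, rename_X, gamma_rename, fb_X]
    have h1' : (fb 1 : Fin 12) = 7 := rfl
    have h0 : (fb 0 : Fin 12) = 6 := rfl
    have h2' : (fb 2 : Fin 12) = 10 := rfl
    have h3' : (fb 3 : Fin 12) = 11 := rfl
    rw [h1', h0, h2', h3']
    ring
  have heq : (LinearMap.mulLeft ℂ ((X 8 : MvPolynomial (Fin 12) ℂ) ^ c2 * X 9 ^ c3))
      ((rename fb).toLinearMap (mono e0 e1 e2 e3)) =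
      X 8 ^ c2 * X 9 ^ c3 * (X 6 ^ e0 * X 7 ^ e1 * X 10 ^ e2 * X 11 ^ e3) := by
    simp only [LinearMap.mulLeft_apply, AlgHom.toLinearMap_apply, mono, map_mul, map_pow,
      rename_X]
    have h0 : (fb 0 : Fin 12) = 6 := rfl
    have h1' : (fb 1 : Fin 12) = 7 := rfl
    have h2' : (fb 2 : Fin 12) = 10 := rfl
    have h3' : (fb 3 : Fin 12) = 11 := rfl
    rw [h0, h1', h2', h3']
  exact heq ▸ (Submodule.span_mono h3 h2)


abbrev TSet : Set (MvPolynomial (Fin 12) ℂ) :=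
  { p : MvPolynomial (Fin 12) ℂ |
    ∃ (u v pq g h q : ℕ) (θ ϑ : Fin 4 → ℤ),
      p = X 2 ^ u * X 3 ^ v * (X 1 * X 4 - X 0 * X 5) ^ pq *
            GammaSeriesAt θ ![X 0, X 1, X 4, X 5] *
          (X 8 ^ g * X 9 ^ h * (X 7 * X 10 - X 6 * X 11) ^ q *
            GammaSeriesAt ϑ ![X 6, X 7, X 10, X 11]) }

lemma subsetT : SetA * SetB ⊆ TSet := by
  rintro p ⟨x, ⟨u, v, pq, θ, rfl⟩, y, ⟨g, h, q, ϑ, rfl⟩, rfl⟩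
  exact ⟨u, v, pq, g, h, q, θ, ϑ, rfl⟩

lemma mem_span_T (x : MvPolynomial (Fin 12) ℂ) :
    x ∈ Submodule.span ℂ TSet := by
  have hmul : Submodule.span ℂ SetA * Submodule.span ℂ SetB ≤ Submodule.span ℂ TSet := by
    rw [Submodule.span_mul_span]
    exact Submodule.span_mono subsetT
  rw [x.as_sum]
  refine Submodule.sum_mem _ fun m hm => ?_
  have hmon : (monomial m (coeff m x) : MvPolynomial (Fin 12) ℂ) =
      coeff m x • monomial m 1 := by
    rw [MvPolynomial.smul_monomial, smul_eq_mul, mul_one]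
  rw [hmon]
  refine Submodule.smul_mem _ _ ?_
  have hprod : (monomial m 1 : MvPolynomial (Fin 12) ℂ) =
      (X 2 ^ m 2 * X 3 ^ m 3 * (X 0 ^ m 0 * X 1 ^ m 1 * X 4 ^ m 4 * X 5 ^ m 5)) *
      (X 8 ^ m 8 * X 9 ^ m 9 * (X 6 ^ m 6 * X 7 ^ m 7 * X 10 ^ m 10 * X 11 ^ m 11)) := by
    simp only [X_pow_eq_monomial, monomial_mul, one_mul, mul_one]
    rw [MvPolynomial.monomial_eq_monomial_iff]
    refine Or.inl ⟨?_, rfl⟩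
    ext i
    fin_cases i <;>
      simp [Finsupp.single_apply, Finsupp.add_apply] <;> decide
  rw [hprod]
  exact hmul (Submodule.mul_mem_mul (memA _ _ _ _ _ _) (memB _ _ _ _ _ _))

/-- `(abb)^λ (aab)^μ (ab)₁₂^ω / (λ!μ!ω!)` lies in the span of the products
`a₃^u a₁₂^v (a₂a₁₃ − a₁a₂₃)^p F_θ(a) · b₃^g b₁₂^h (b₂b₁₃ − b₁b₂₃)^q G_ϑ(b)`. -/
theorem second_main_relation (lam mu om : ℕ) :
    C (((lam.factorial * mu.factorial * om.factorial : ℕ) : ℂ))⁻¹ *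
        (abb ^ lam * aab ^ mu * ab₁₂ ^ om) ∈
      Submodule.span ℂ { p : MvPolynomial (Fin 12) ℂ |
        ∃ (u v pq g h q : ℕ) (θ ϑ : Fin 4 → ℤ),
          p = a₃ ^ u * a₁₂ ^ v * (a₂ * a₁₃ - a₁ * a₂₃) ^ pq *
                GammaSeriesAt θ ![a₁, a₂, a₁₃, a₂₃] *
              (b₃ ^ g * b₁₂ ^ h * (b₂ * b₁₃ - b₁ * b₂₃) ^ q *
                GammaSeriesAt ϑ ![b₁, b₂, b₁₃, b₂₃]) } :=
  mem_span_T _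

end Stmt14
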